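/- arXiv:1208.5016 — 4 statements merged into one kernel-verified Lean document; each statement's English description precedes it below -/
import Mathlib

section
/- Let (λ_n)_{n≥1} and (ξ_n)_{n≥1} satisfy the spectral bounds with volumes V_λ and V_ξ respectively, and let V̂ = max(V_λ, V_ξ) and μ = max(λ_1, ξ_1). Then for i = 1, 2: |λ_i − ξ_i|/(λ_i·ξ_i) ≤ (d+2)/(d·4π²)·(B_d·V̂/i)^{2/d} − (1/μ)·(d/(d+4))^{i−1}, and for every n ≥ 3: |λ_n − ξ_n|/(λ_n·ξ_n) ≤ (d+2)/(d·4π²)·(B_d·V̂/n)^{2/d} − (1/μ)·d/((d+2.64)·n^{2/d}). -/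
open Real

/-- The Lebesgue volume of the unit ball in `ℝ^d`. -/
noncomputable def unitBallVol (d : ℕ) : ℝ :=
  (MeasureTheory.volume (Metric.ball (0 : EuclideanSpace ℝ (Fin d)) 1)).toReal

/-- A sequence `(λ_n)_{n ≥ 1}` of positive reals satisfies the spectral bounds in dimension `d`
with volume `V`: it is nondecreasing, satisfies the Li–Yau lower bound, and satisfies the
(weakened) Cheng–Yang type upper bounds. -/
def SpectralBounds (d : ℕ) (V : ℝ) (lam : ℕ → ℝ) : Prop :=
  (∀ n : ℕ, 1 ≤ n → 0 < lam n) ∧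
  (∀ n : ℕ, 1 ≤ n → lam n ≤ lam (n + 1)) ∧
  (∀ n : ℕ, 1 ≤ n →
    ((d : ℝ) / ((d : ℝ) + 2)) * (4 * π ^ 2) * ((n : ℝ) / (unitBallVol d * V)) ^ ((2 : ℝ) / d)
      ≤ lam n) ∧
  (lam 2 ≤ (1 + 4 / (d : ℝ)) * lam 1) ∧
  (∀ n : ℕ, 2 ≤ n → lam (n + 1) ≤ (1 + 2.64 / (d : ℝ)) * (n : ℝ) ^ ((2 : ℝ) / d) * lam 1)


lemma aux_abs (a b A B : ℝ) (ha : 0 < a) (hb : 0 < b)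
    (hA1 : 1/a ≤ A) (hA2 : 1/b ≤ A) (hB1 : B ≤ 1/a) (hB2 : B ≤ 1/b) :
    |a - b| / (a*b) ≤ A - B := by
  have e : ∀ x y : ℝ, x ≠ 0 → y ≠ 0 → (y - x)/(x*y) = 1/x - 1/y := by
    intro x y hx hy
    rw [div_sub_div 1 1 hx hy, one_mul, mul_one]
  rcases le_total a b with h | h
  · rw [abs_sub_comm, abs_of_nonneg (by linarith), e a b ha.ne' hb.ne']; linarith
  · rw [abs_of_nonneg (by linarith), mul_comm, e b a hb.ne' ha.ne']; linarith

lemma unitBallVol_pos (d : ℕ) : 0 < unitBallVol d := by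
  refine ENNReal.toReal_pos (Metric.measure_ball_pos _ _ one_pos).ne' MeasureTheory.measure_ball_lt_top.ne

-- Li–Yau inverse bound
lemma inv_le_LiYau (d : ℕ) (hd : 2 ≤ d) (V Vh : ℝ) (hV : 0 < V) (hVh : V ≤ Vh)
    (lam : ℕ → ℝ) (h : SpectralBounds d V lam) (n : ℕ) (hn : 1 ≤ n) :
    1 / lam n ≤ ((d:ℝ)+2)/((d:ℝ)*(4*π^2)) * (unitBallVol d * Vh / (n:ℝ)) ^ ((2:ℝ)/d) := by
  have hB := unitBallVol_pos d
  have hdpos : (0:ℝ) < d := by positivity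
  have hnpos : (0:ℝ) < (n:ℝ) := by exact_mod_cast hn
  have hπ : (0:ℝ) < 4*π^2 := by positivity
  have hVhpos : (0:ℝ) < Vh := lt_of_lt_of_le hV hVh
  set C := (d:ℝ)/((d:ℝ)+2) * (4*π^2) with hC
  have hCpos : 0 < C := by positivity
  have hx : (0:ℝ) < (n:ℝ)/(unitBallVol d * Vh) := by positivity
  have hle : (n:ℝ)/(unitBallVol d * Vh) ≤ (n:ℝ)/(unitBallVol d * V) := by
    gcongr
  have hr : ((n:ℝ)/(unitBallVol d * Vh)) ^ ((2:ℝ)/d)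
      ≤ ((n:ℝ)/(unitBallVol d * V)) ^ ((2:ℝ)/d) :=
    Real.rpow_le_rpow hx.le hle (by positivity)
  have hc : C * ((n:ℝ)/(unitBallVol d * Vh)) ^ ((2:ℝ)/d) ≤ lam n := by
    calc C * ((n:ℝ)/(unitBallVol d * Vh)) ^ ((2:ℝ)/d)
        ≤ C * ((n:ℝ)/(unitBallVol d * V)) ^ ((2:ℝ)/d) := by gcongr
      _ ≤ lam n := h.2.2.1 n hn
  have hcpos : 0 < C * ((n:ℝ)/(unitBallVol d * Vh)) ^ ((2:ℝ)/d) := by positivity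
  have h1 := one_div_le_one_div_of_le hcpos hc
  refine h1.trans_eq ?_
  set y := (unitBallVol d * Vh / (n:ℝ)) ^ ((2:ℝ)/d) with hy
  have hypos : 0 < y := by positivity
  have hinv : ((n:ℝ)/(unitBallVol d * Vh)) ^ ((2:ℝ)/d) = y⁻¹ := by
    rw [hy, ← Real.inv_rpow (by positivity), inv_div]
  rw [hinv, hC]
  field_simp

-- upper bounds on lam giving lower bounds on 1/lam
lemma inv_ge_one (lam : ℕ → ℝ) (h1 : 0 < lam 1) (mu : ℝ) (hmu : lam 1 ≤ mu) :
    1/mu ≤ 1/lam 1 := one_div_le_one_div_of_le h1 hmu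

lemma inv_ge_two (d : ℕ) (hd : 2 ≤ d) (V : ℝ) (lam : ℕ → ℝ) (h : SpectralBounds d V lam)
    (mu : ℝ) (hmu : lam 1 ≤ mu) :
    (1/mu)*((d:ℝ)/((d:ℝ)+4)) ≤ 1/lam 2 := by
  have hdpos : (0:ℝ) < d := by positivity
  have h2 : 0 < lam 2 := h.1 2 (by norm_num)
  have h1 : 0 < lam 1 := h.1 1 le_rfl
  have hmupos : 0 < mu := lt_of_lt_of_le h1 hmu
  have hb : lam 2 ≤ (1 + 4/(d:ℝ)) * mu := by
    calc lam 2 ≤ (1 + 4/(d:ℝ)) * lam 1 := h.2.2.2.1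
      _ ≤ (1 + 4/(d:ℝ)) * mu := by gcongr
  have := one_div_le_one_div_of_le h2 hb
  refine le_trans (le_of_eq ?_) this
  have e : (1 + 4/(d:ℝ)) * mu = ((d:ℝ)+4)*mu/(d:ℝ) := by
    field_simp
  rw [one_div_mul_eq_div, div_div, e, one_div_div]

lemma inv_ge_n (d : ℕ) (hd : 2 ≤ d) (V : ℝ) (lam : ℕ → ℝ) (h : SpectralBounds d V lam)
    (mu : ℝ) (hmu : lam 1 ≤ mu) (n : ℕ) (hn : 3 ≤ n) :
    (1/mu)*((d:ℝ)/(((d:ℝ)+2.64)*(n:ℝ)^((2:ℝ)/d))) ≤ 1/lam n := by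
  have hdpos : (0:ℝ) < d := by positivity
  have hnpos : 0 < lam n := h.1 n (by omega)
  have h1 : 0 < lam 1 := h.1 1 le_rfl
  have hmupos : 0 < mu := lt_of_lt_of_le h1 hmu
  have hnr : (0:ℝ) < (n:ℝ) := by positivity
  obtain ⟨m, rfl⟩ : ∃ m, n = m + 1 := ⟨n - 1, by omega⟩
  have hm2 : 2 ≤ m := by omega
  have hmr : (0:ℝ) ≤ (m:ℝ) := by positivity
  have hmn : (m:ℝ) ≤ (m:ℝ) + 1 := by linarith
  have hrle : (m:ℝ)^((2:ℝ)/d) ≤ ((m+1 : ℕ):ℝ)^((2:ℝ)/d) := by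
    push_cast
    exact Real.rpow_le_rpow hmr hmn (by positivity)
  have hb : lam (m+1) ≤ (1 + 2.64/(d:ℝ)) * ((m+1:ℕ):ℝ)^((2:ℝ)/d) * mu := by
    calc lam (m+1) ≤ (1 + 2.64/(d:ℝ)) * (m:ℝ)^((2:ℝ)/d) * lam 1 := h.2.2.2.2 m hm2
      _ ≤ (1 + 2.64/(d:ℝ)) * ((m+1:ℕ):ℝ)^((2:ℝ)/d) * mu := by
          gcongr
  have := one_div_le_one_div_of_le hnpos hb
  refine le_trans (le_of_eq ?_) this
  have e : (1 + 2.64/(d:ℝ)) * ((m+1:ℕ):ℝ)^((2:ℝ)/d) * mu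
      = ((d:ℝ)+2.64) * ((m+1:ℕ):ℝ)^((2:ℝ)/d) * mu / (d:ℝ) := by
    field_simp
  rw [one_div_mul_eq_div, div_div, e, one_div_div]

/-- Componentwise upper bounds on the WESD weights `|λ_n - ξ_n|/(λ_n·ξ_n)` for two spectra
satisfying the spectral bounds. -/
theorem wesd_componentwise_bounds (d : ℕ) (hd : 2 ≤ d) (Vl Vx : ℝ) (hVl : 0 < Vl) (hVx : 0 < Vx)
    (lam xi : ℕ → ℝ) (hlam : SpectralBounds d Vl lam) (hxi : SpectralBounds d Vx xi) :
    (∀ i : ℕ, i = 1 ∨ i = 2 →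
      |lam i - xi i| / (lam i * xi i) ≤
        ((d : ℝ) + 2) / ((d : ℝ) * (4 * π ^ 2)) *
            (unitBallVol d * max Vl Vx / (i : ℝ)) ^ ((2 : ℝ) / d) -
          (1 / max (lam 1) (xi 1)) * ((d : ℝ) / ((d : ℝ) + 4)) ^ (i - 1)) ∧
    (∀ n : ℕ, 3 ≤ n →
      |lam n - xi n| / (lam n * xi n) ≤
        ((d : ℝ) + 2) / ((d : ℝ) * (4 * π ^ 2)) *
            (unitBallVol d * max Vl Vx / (n : ℝ)) ^ ((2 : ℝ) / d) -
          (1 / max (lam 1) (xi 1)) * ((d : ℝ) / (((d : ℝ) + 2.64) * (n : ℝ) ^ ((2 : ℝ) / d)))) := by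
  have hlam1 : lam 1 ≤ max (lam 1) (xi 1) := le_max_left _ _
  have hxi1 : xi 1 ≤ max (lam 1) (xi 1) := le_max_right _ _
  constructor
  · intro i hi
    rcases hi with rfl | rfl
    · refine aux_abs _ _ _ _ (hlam.1 1 le_rfl) (hxi.1 1 le_rfl)
        (inv_le_LiYau d hd Vl (max Vl Vx) hVl (le_max_left _ _) lam hlam 1 le_rfl)
        (inv_le_LiYau d hd Vx (max Vl Vx) hVx (le_max_right _ _) xi hxi 1 le_rfl) ?_ ?_
      · simpa using inv_ge_one lam (hlam.1 1 le_rfl) _ hlam1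
      · simpa using inv_ge_one xi (hxi.1 1 le_rfl) _ hxi1
    · refine aux_abs _ _ _ _ (hlam.1 2 (by norm_num)) (hxi.1 2 (by norm_num))
        (inv_le_LiYau d hd Vl (max Vl Vx) hVl (le_max_left _ _) lam hlam 2 (by norm_num))
        (inv_le_LiYau d hd Vx (max Vl Vx) hVx (le_max_right _ _) xi hxi 2 (by norm_num)) ?_ ?_
      · simpa using inv_ge_two d hd Vl lam hlam _ hlam1
      · simpa using inv_ge_two d hd Vx xi hxi _ hxi1
  · intro n hn
    exact aux_abs _ _ _ _ (hlam.1 n (by omega)) (hxi.1 n (by omega))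
      (inv_le_LiYau d hd Vl (max Vl Vx) hVl (le_max_left _ _) lam hlam n (by omega))
      (inv_le_LiYau d hd Vx (max Vl Vx) hVx (le_max_right _ _) xi hxi n (by omega))
      (inv_ge_n d hd Vl lam hlam _ hlam1 n hn)
      (inv_ge_n d hd Vx xi hxi _ hxi1 n hn)
end

section
/- Let (λ_n)_{n≥1} and (ξ_n)_{n≥1} satisfy the spectral bounds with volumes V_λ and V_ξ respectively, and let p be a real number with p > d/2. Then the series Σ_{n=1}^∞ (|λ_n − ξ_n|/(λ_n·ξ_n))^p converges (the nonnegative terms are summable), so the Weighted Spectral Distance ρ(λ, ξ) = (Σ_{n=1}^∞ (|λ_n − ξ_n|/(λ_n·ξ_n))^p)^{1/p} is a well-defined finite real number. -/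
open Real

/-- Convergence of the WESD series: for two spectra satisfying the spectral bounds and
`p > d/2`, the series `Σ_{n=1}^∞ (|λ_n - ξ_n|/(λ_n·ξ_n))^p` converges, so the Weighted
Spectral Distance `ρ(λ,ξ) = (Σ_{n=1}^∞ (|λ_n - ξ_n|/(λ_n·ξ_n))^p)^{1/p}` is a well-defined
finite real number. -/
theorem wesd_summable (d : ℕ) (hd : 2 ≤ d) (Vl Vx : ℝ) (hVl : 0 < Vl) (hVx : 0 < Vx)
    (lam xi : ℕ → ℝ) (hlam : SpectralBounds d Vl lam) (hxi : SpectralBounds d Vx xi)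
    (p : ℝ) (hp : (d : ℝ) / 2 < p) :
    Summable fun n : ℕ =>
      (|lam (n + 1) - xi (n + 1)| / (lam (n + 1) * xi (n + 1))) ^ p := by
  obtain ⟨hl_pos, -, hl_low, -, -⟩ := hlam
  obtain ⟨hx_pos, -, hx_low, -, -⟩ := hxi
  have hd0 : (0:ℝ) < d := by exact_mod_cast Nat.lt_of_lt_of_le (by norm_num) hd
  have hπ := Real.pi_pos
  have hBl : 0 < unitBallVol d * Vl := mul_pos (unitBallVol_pos d) hVl
  have hBx : 0 < unitBallVol d * Vx := mul_pos (unitBallVol_pos d) hVx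
  have hp0 : 0 < p := lt_trans (by positivity) hp
  set e : ℝ := (2:ℝ)/d with he
  have he0 : 0 < e := by positivity
  set cl : ℝ := ((d:ℝ)/((d:ℝ)+2)) * (4*π^2) / (unitBallVol d * Vl) ^ e with hcl_def
  set cx : ℝ := ((d:ℝ)/((d:ℝ)+2)) * (4*π^2) / (unitBallVol d * Vx) ^ e with hcx_def
  have hcl : 0 < cl := by
    have := Real.rpow_pos_of_pos hBl e
    positivity
  have hcx : 0 < cx := by
    have := Real.rpow_pos_of_pos hBx e
    positivity
  have hlow : ∀ (V : ℝ) (hV : 0 < unitBallVol d * V) (f : ℕ → ℝ)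
      (hf : ∀ n : ℕ, 1 ≤ n → ((d : ℝ) / ((d : ℝ) + 2)) * (4 * π ^ 2) *
        ((n : ℝ) / (unitBallVol d * V)) ^ ((2 : ℝ) / d) ≤ f n) (n : ℕ),
      ((d:ℝ)/((d:ℝ)+2)) * (4*π^2) / (unitBallVol d * V) ^ e * ((n+1:ℕ):ℝ) ^ e ≤ f (n+1) := by
    intro V hV f hf n
    have h := hf (n+1) (by omega)
    rw [← he] at h
    rw [Real.div_rpow (by positivity) hV.le] at h
    have hrw : ((d:ℝ)/((d:ℝ)+2)) * (4*π^2) / (unitBallVol d * V) ^ e * ((n+1:ℕ):ℝ) ^ e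
        = ((d:ℝ)/((d:ℝ)+2)) * (4*π^2) * (((n+1:ℕ):ℝ) ^ e / (unitBallVol d * V) ^ e) := by
      ring
    rw [hrw]; exact h
  have hlowl := hlow Vl hBl lam hl_low
  have hlowx := hlow Vx hBx xi hx_low
  set C : ℝ := cl⁻¹ + cx⁻¹ with hC_def
  have hC : 0 < C := by positivity
  have hep : 1 < e * p := by
    have h1 : e * ((d:ℝ)/2) < e * p := by exact mul_lt_mul_of_pos_left hp he0
    have h2 : e * ((d:ℝ)/2) = 1 := by
      rw [he]; field_simp
    linarith
  have hsum : Summable (fun n : ℕ => C ^ p * ((n+1:ℕ):ℝ) ^ (-(e*p))) := by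
    have h1 : Summable (fun n : ℕ => ((n:ℝ)) ^ (-(e*p))) :=
      Real.summable_nat_rpow.mpr (by linarith)
    exact ((summable_nat_add_iff 1).mpr h1).mul_left _
  refine Summable.of_nonneg_of_le (fun n => Real.rpow_nonneg (div_nonneg (abs_nonneg _) (mul_nonneg (hl_pos _ (by omega)).le (hx_pos _ (by omega)).le)) p) (fun n => ?_) hsum
  have hL : 0 < lam (n+1) := hl_pos _ (by omega)
  have hX : 0 < xi (n+1) := hx_pos _ (by omega)
  have hn1 : (0:ℝ) < ((n+1:ℕ):ℝ) := by positivity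
  have hne : (0:ℝ) < ((n+1:ℕ):ℝ) ^ e := Real.rpow_pos_of_pos hn1 e
  have hLl : cl * ((n+1:ℕ):ℝ) ^ e ≤ lam (n+1) := hlowl n
  have hXl : cx * ((n+1:ℕ):ℝ) ^ e ≤ xi (n+1) := hlowx n
  have key : |lam (n+1) - xi (n+1)| / (lam (n+1) * xi (n+1)) ≤ C * (((n+1:ℕ):ℝ) ^ e)⁻¹ := by
    have habs : |lam (n+1) - xi (n+1)| ≤ lam (n+1) + xi (n+1) := by
      have := abs_sub (lam (n+1)) (xi (n+1))
      calc |lam (n+1) - xi (n+1)| ≤ |lam (n+1)| + |xi (n+1)| := abs_sub _ _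
        _ = lam (n+1) + xi (n+1) := by rw [abs_of_pos hL, abs_of_pos hX]
    have h1 : |lam (n+1) - xi (n+1)| / (lam (n+1) * xi (n+1))
        ≤ (lam (n+1))⁻¹ + (xi (n+1))⁻¹ := by
      rw [div_le_iff₀ (by positivity)]
      calc |lam (n+1) - xi (n+1)| ≤ lam (n+1) + xi (n+1) := habs
        _ = ((lam (n+1))⁻¹ + (xi (n+1))⁻¹) * (lam (n+1) * xi (n+1)) := by
            field_simp; ring
    have h2 : (lam (n+1))⁻¹ ≤ cl⁻¹ * (((n+1:ℕ):ℝ) ^ e)⁻¹ := by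
      rw [← mul_inv]
      exact inv_anti₀ (by positivity) hLl
    have h3 : (xi (n+1))⁻¹ ≤ cx⁻¹ * (((n+1:ℕ):ℝ) ^ e)⁻¹ := by
      rw [← mul_inv]
      exact inv_anti₀ (by positivity) hXl
    calc |lam (n+1) - xi (n+1)| / (lam (n+1) * xi (n+1)) ≤ (lam (n+1))⁻¹ + (xi (n+1))⁻¹ := h1
      _ ≤ cl⁻¹ * (((n+1:ℕ):ℝ) ^ e)⁻¹ + cx⁻¹ * (((n+1:ℕ):ℝ) ^ e)⁻¹ := add_le_add h2 h3
      _ = C * (((n+1:ℕ):ℝ) ^ e)⁻¹ := by rw [hC_def]; ring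
  calc (|lam (n+1) - xi (n+1)| / (lam (n+1) * xi (n+1))) ^ p
      ≤ (C * (((n+1:ℕ):ℝ) ^ e)⁻¹) ^ p :=
        Real.rpow_le_rpow (by positivity) key hp0.le
    _ = C ^ p * ((n+1:ℕ):ℝ) ^ (-(e*p)) := by
        rw [Real.mul_rpow hC.le (by positivity), ← Real.rpow_neg_one (((n+1:ℕ):ℝ) ^ e),
          ← Real.rpow_mul hn1.le, ← Real.rpow_mul hn1.le]
        congr 1
        ring
end

section
/- Let (λ_n)_{n≥1} and (ξ_n)_{n≥1} satisfy the spectral bounds with volumes V_λ and V_ξ respectively, let p > d/2, and set V̂ = max(V_λ, V_ξ), μ = max(λ_1, ξ_1), C = Σ_{i=1,2} [(d+2)/(d·4π²)·(B_d·V̂/i)^{2/d} − (1/μ)·(d/(d+4))^{i−1}]^p, and K = [(d+2)/(d·4π²)·(B_d·V̂)^{2/d} − (1/μ)·d/(d+2.64)]^p. Then Σ_{n=1}^∞ (|λ_n − ξ_n|/(λ_n·ξ_n))^p ≤ C + K·[ζ(2p/d) − 1 − (1/2)^{2p/d}], where ζ is the Riemann zeta function; consequently ρ(λ, ξ) = (Σ_{n=1}^∞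 (|λ_n − ξ_n|/(λ_n·ξ_n))^p)^{1/p} ≤ {C + K·[ζ(2p/d) − 1 − (1/2)^{2p/d}]}^{1/p}. -/
open Real

/-- The Riemann zeta function at a real argument `s > 1`, `ζ(s) = Σ_{n=1}^∞ n^{-s}`
(the `n = 0` term of the `tsum` vanishes since `1/0^s = 0` in Lean for `s > 0`). -/
noncomputable def zetaReal (s : ℝ) : ℝ := ∑' n : ℕ, 1 / (n : ℝ) ^ s

lemma ratio_le (a b L U : ℝ) (ha : 0 < a) (hb : 0 < b)
    (h1 : L ≤ 1/a) (h2 : 1/a ≤ U) (h3 : L ≤ 1/b) (h4 : 1/b ≤ U) :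
    |a - b| / (a * b) ≤ U - L := by
  have key : 1/b - 1/a = (a - b)/(a*b) := by
    rw [div_sub_div _ _ hb.ne' ha.ne', one_mul, mul_one, mul_comm b a]
  have h5 : |a - b| / (a*b) = |1/b - 1/a| := by
    rw [key, abs_div, abs_of_pos (mul_pos ha hb)]
  rw [h5, abs_sub_le_iff]
  constructor <;> linarith

lemma inv_lam_upper (d : ℕ) (hd : 2 ≤ d) (V Vh : ℝ) (hV : 0 < V) (hVh : V ≤ Vh)
    (lam : ℕ → ℝ) (h : SpectralBounds d V lam) (m : ℕ) (hm : 1 ≤ m) :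
    1 / lam m ≤ ((d:ℝ)+2)/((d:ℝ)*(4*π^2)) * (unitBallVol d * Vh / m) ^ ((2:ℝ)/d) := by
  have hd0 : (0:ℝ) < d := by positivity
  have hB : 0 < unitBallVol d := unitBallVol_pos d
  have hm0 : (0:ℝ) < m := by exact_mod_cast hm
  have hVh0 : 0 < Vh := hV.trans_le hVh
  have hLY := h.2.2.1 m hm
  set Y : ℝ := (unitBallVol d * Vh / (m:ℝ)) ^ ((2:ℝ)/d) with hY
  have hYpos : 0 < Y := by positivity
  have hinv : ((m:ℝ)/(unitBallVol d * Vh)) ^ ((2:ℝ)/d) = Y⁻¹ := by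
    rw [hY, ← Real.inv_rpow (by positivity), inv_div]
  have hL : ((d:ℝ)/((d:ℝ)+2)) * (4*π^2) * Y⁻¹ ≤ lam m := by
    rw [← hinv]
    calc ((d:ℝ)/((d:ℝ)+2)) * (4*π^2) * ((m:ℝ)/(unitBallVol d * Vh)) ^ ((2:ℝ)/d)
        ≤ ((d:ℝ)/((d:ℝ)+2)) * (4*π^2) * ((m:ℝ)/(unitBallVol d * V)) ^ ((2:ℝ)/d) := by
          gcongr
      _ ≤ lam m := hLY
  have hLpos : 0 < ((d:ℝ)/((d:ℝ)+2)) * (4*π^2) * Y⁻¹ := by positivity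
  have := one_div_le_one_div_of_le hLpos hL
  refine this.trans (le_of_eq ?_)
  rw [one_div]
  field_simp

lemma inv_lam_lower2 (d : ℕ) (hd : 2 ≤ d) (V : ℝ) (lam : ℕ → ℝ) (h : SpectralBounds d V lam)
    (mu : ℝ) (hmu : lam 1 ≤ mu) :
    (1 / mu) * ((d:ℝ)/((d:ℝ)+4)) ≤ 1 / lam 2 := by
  have hd0 : (0:ℝ) < d := by positivity
  have h1 := h.1 1 le_rfl
  have h2 := h.1 2 one_le_two
  have hmu0 : 0 < mu := h1.trans_le hmu
  have hub : lam 2 ≤ (1 + 4/(d:ℝ)) * mu := by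
    calc lam 2 ≤ (1 + 4/(d:ℝ)) * lam 1 := h.2.2.2.1
      _ ≤ (1 + 4/(d:ℝ)) * mu := by gcongr
  have := one_div_le_one_div_of_le h2 hub
  refine le_trans (le_of_eq ?_) this
  field_simp
  all_goals left; first | trivial | ring

lemma inv_lam_lower3 (d : ℕ) (hd : 2 ≤ d) (V : ℝ) (lam : ℕ → ℝ) (h : SpectralBounds d V lam)
    (mu : ℝ) (hmu : lam 1 ≤ mu) (n : ℕ) (hn : 2 ≤ n) :
    (1 / mu) * ((d:ℝ)/((d:ℝ)+2.64)) * (1 / ((n:ℝ)+1) ^ ((2:ℝ)/d)) ≤ 1 / lam (n+1) := by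
  have hd0 : (0:ℝ) < d := by positivity
  have h1 := h.1 1 le_rfl
  have hpos := h.1 (n+1) (by omega)
  have hmu0 : 0 < mu := h1.trans_le hmu
  have hn0 : (0:ℝ) < n := by positivity
  have hub : lam (n+1) ≤ (1 + 2.64/(d:ℝ)) * ((n:ℝ)+1) ^ ((2:ℝ)/d) * mu := by
    calc lam (n+1) ≤ (1 + 2.64/(d:ℝ)) * (n:ℝ) ^ ((2:ℝ)/d) * lam 1 := h.2.2.2.2 n hn
      _ ≤ (1 + 2.64/(d:ℝ)) * ((n:ℝ)+1) ^ ((2:ℝ)/d) * mu := by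
          gcongr <;> first | linarith | positivity
  have := one_div_le_one_div_of_le hpos hub
  refine le_trans (le_of_eq ?_) this
  have hX : (0:ℝ) < ((n:ℝ)+1) ^ ((2:ℝ)/d) := by positivity
  have h264 : (0:ℝ) < (d:ℝ) + 2.64 := by linarith
  field_simp
  all_goals first | (left; first | trivial | ring) | ring

/-- Shape-dependent upper bound for WESD: the series `Σ_{n=1}^∞ (|λ_n - ξ_n|/(λ_n·ξ_n))^p`
is bounded by `C + K·[ζ(2p/d) - 1 - (1/2)^{2p/d}]`, and hence the Weighted Spectral
Distance is bounded by the `1/p`-th power of this quantity. -/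
theorem wesd_upper_bound (d : ℕ) (hd : 2 ≤ d) (Vl Vx : ℝ) (hVl : 0 < Vl) (hVx : 0 < Vx)
    (lam xi : ℕ → ℝ) (hlam : SpectralBounds d Vl lam) (hxi : SpectralBounds d Vx xi)
    (p : ℝ) (hp : (d : ℝ) / 2 < p) (C K : ℝ)
    (hC : C = ∑ i ∈ Finset.Icc (1:ℕ) 2,
      (((d : ℝ) + 2) / ((d : ℝ) * (4 * π ^ 2)) *
          (unitBallVol d * max Vl Vx / (i : ℝ)) ^ ((2 : ℝ) / d) -
        (1 / max (lam 1) (xi 1)) * ((d : ℝ) / ((d : ℝ) + 4)) ^ (i - 1)) ^ p)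
    (hK : K = (((d : ℝ) + 2) / ((d : ℝ) * (4 * π ^ 2)) *
          (unitBallVol d * max Vl Vx) ^ ((2 : ℝ) / d) -
        (1 / max (lam 1) (xi 1)) * ((d : ℝ) / ((d : ℝ) + 2.64))) ^ p) :
    (∑' n : ℕ, (|lam (n + 1) - xi (n + 1)| / (lam (n + 1) * xi (n + 1))) ^ p) ≤
        C + K * (zetaReal (2 * p / d) - 1 - (1 / 2 : ℝ) ^ (2 * p / d)) ∧
      (∑' n : ℕ, (|lam (n + 1) - xi (n + 1)| / (lam (n + 1) * xi (n + 1))) ^ p) ^ (1 / p) ≤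
        (C + K * (zetaReal (2 * p / d) - 1 - (1 / 2 : ℝ) ^ (2 * p / d))) ^ (1 / p) := by
  have hd0 : (0:ℝ) < d := by positivity
  have hd2 : (2:ℝ) ≤ d := by exact_mod_cast hd
  have hp0 : 0 < p := by linarith
  have hB : 0 < unitBallVol d := unitBallVol_pos d
  set mu : ℝ := max (lam 1) (xi 1) with hmu
  set Vh : ℝ := max Vl Vx with hVh
  have hVlh : Vl ≤ Vh := le_max_left _ _
  have hVxh : Vx ≤ Vh := le_max_right _ _
  have hVh0 : 0 < Vh := hVl.trans_le hVlh
  have hmul : lam 1 ≤ mu := le_max_left _ _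
  have hmux : xi 1 ≤ mu := le_max_right _ _
  have hlp := hlam.1
  have hxp := hxi.1
  have hmu0 : 0 < mu := (hlp 1 le_rfl).trans_le hmul
  set s : ℝ := 2 * p / d with hsdef
  have hs1 : 1 < s := by
    rw [hsdef, lt_div_iff₀ hd0]
    linarith
  have hs0 : 0 < s := lt_trans one_pos hs1
  set coef : ℝ := ((d:ℝ)+2)/((d:ℝ)*(4*π^2)) with hcoef
  set Kb : ℝ := coef * (unitBallVol d * Vh) ^ ((2:ℝ)/d) - (1/mu) * ((d:ℝ)/((d:ℝ)+2.64))
    with hKb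
  set F : ℕ → ℝ := fun n => (|lam (n + 1) - xi (n + 1)| / (lam (n + 1) * xi (n + 1))) ^ p
    with hF
  set Q : ℕ → ℝ := fun n => 1 / (n : ℝ) ^ s with hQ
  -- nonnegativity of F
  have hF0 : ∀ n : ℕ, 0 ≤ F n := by
    intro n
    have h1 := hlp (n+1) (by omega)
    have h2 := hxp (n+1) (by omega)
    exact Real.rpow_nonneg (div_nonneg (abs_nonneg _) (by positivity)) p
  -- upper bounds on 1/lam m, 1/xi m
  have hUl : ∀ m : ℕ, 1 ≤ m → 1 / lam m ≤ coef * (unitBallVol d * Vh / m) ^ ((2:ℝ)/d) :=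
    fun m hm => inv_lam_upper d hd Vl Vh hVl hVlh lam hlam m hm
  have hUx : ∀ m : ℕ, 1 ≤ m → 1 / xi m ≤ coef * (unitBallVol d * Vh / m) ^ ((2:ℝ)/d) :=
    fun m hm => inv_lam_upper d hd Vx Vh hVx hVxh xi hxi m hm
  -- bound for F 0
  have hF0le : F 0 ≤ (coef * (unitBallVol d * Vh) ^ ((2:ℝ)/d) - 1/mu) ^ p := by
    have hU1l : 1 / lam 1 ≤ coef * (unitBallVol d * Vh) ^ ((2:ℝ)/d) := by
      have := hUl 1 le_rfl
      simpa using this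
    have hU1x : 1 / xi 1 ≤ coef * (unitBallVol d * Vh) ^ ((2:ℝ)/d) := by
      have := hUx 1 le_rfl
      simpa using this
    have hr := ratio_le (lam 1) (xi 1) (1/mu) (coef * (unitBallVol d * Vh) ^ ((2:ℝ)/d))
      (hlp 1 le_rfl) (hxp 1 le_rfl)
      (one_div_le_one_div_of_le (hlp 1 le_rfl) hmul) hU1l
      (one_div_le_one_div_of_le (hxp 1 le_rfl) hmux) hU1x
    have h1 := hlp 1 le_rfl
    have h2 := hxp 1 le_rfl
    exact Real.rpow_le_rpow (div_nonneg (abs_nonneg _) (by positivity)) hr hp0.le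
  -- bound for F 1
  have hF1le : F 1 ≤
      (coef * (unitBallVol d * Vh / 2) ^ ((2:ℝ)/d) - (1/mu) * ((d:ℝ)/((d:ℝ)+4))) ^ p := by
    have hU2l : 1 / lam 2 ≤ coef * (unitBallVol d * Vh / 2) ^ ((2:ℝ)/d) := by
      have := hUl 2 one_le_two
      push_cast at this
      exact this
    have hU2x : 1 / xi 2 ≤ coef * (unitBallVol d * Vh / 2) ^ ((2:ℝ)/d) := by
      have := hUx 2 one_le_two
      push_cast at this
      exact this
    have hr := ratio_le (lam 2) (xi 2) ((1/mu) * ((d:ℝ)/((d:ℝ)+4)))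
      (coef * (unitBallVol d * Vh / 2) ^ ((2:ℝ)/d))
      (hlp 2 one_le_two) (hxp 2 one_le_two)
      (inv_lam_lower2 d hd Vl lam hlam mu hmul) hU2l
      (inv_lam_lower2 d hd Vx xi hxi mu hmux) hU2x
    have h1 := hlp 2 one_le_two
    have h2 := hxp 2 one_le_two
    exact Real.rpow_le_rpow (div_nonneg (abs_nonneg _) (by positivity)) hr hp0.le
  -- the tail bound, raw form
  have htail0 : ∀ k : ℕ,
      |lam (k+3) - xi (k+3)| / (lam (k+3) * xi (k+3)) ≤
        Kb * (1 / ((k:ℝ)+3) ^ ((2:ℝ)/d)) := by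
    intro k
    have hX : (0:ℝ) < ((k:ℝ)+3) ^ ((2:ℝ)/d) := by positivity
    have hU3l : 1 / lam (k+3) ≤ coef * (unitBallVol d * Vh / ((k:ℝ)+3)) ^ ((2:ℝ)/d) := by
      have := hUl (k+3) (by omega)
      push_cast at this
      exact this
    have hU3x : 1 / xi (k+3) ≤ coef * (unitBallVol d * Vh / ((k:ℝ)+3)) ^ ((2:ℝ)/d) := by
      have := hUx (k+3) (by omega)
      push_cast at this
      exact this
    have hL3l : (1/mu) * ((d:ℝ)/((d:ℝ)+2.64)) * (1 / ((k:ℝ)+3) ^ ((2:ℝ)/d)) ≤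
        1 / lam (k+3) := by
      have h := inv_lam_lower3 d hd Vl lam hlam mu hmul (k+2) (by omega)
      simp only [show k+2+1 = k+3 from by omega] at h
      push_cast at h
      have e : (k:ℝ) + 2 + 1 = (k:ℝ) + 3 := by ring
      rw [e] at h
      exact h
    have hL3x : (1/mu) * ((d:ℝ)/((d:ℝ)+2.64)) * (1 / ((k:ℝ)+3) ^ ((2:ℝ)/d)) ≤
        1 / xi (k+3) := by
      have h := inv_lam_lower3 d hd Vx xi hxi mu hmux (k+2) (by omega)
      simp only [show k+2+1 = k+3 from by omega] at h
      push_cast at h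
      have e : (k:ℝ) + 2 + 1 = (k:ℝ) + 3 := by ring
      rw [e] at h
      exact h
    have hr := ratio_le (lam (k+3)) (xi (k+3))
      ((1/mu) * ((d:ℝ)/((d:ℝ)+2.64)) * (1 / ((k:ℝ)+3) ^ ((2:ℝ)/d)))
      (coef * (unitBallVol d * Vh / ((k:ℝ)+3)) ^ ((2:ℝ)/d))
      (hlp (k+3) (by omega)) (hxp (k+3) (by omega)) hL3l hU3l hL3x hU3x
    refine hr.trans (le_of_eq ?_)
    rw [Real.div_rpow (by positivity) (by positivity : (0:ℝ) ≤ (k:ℝ)+3)]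
    rw [hKb]
    field_simp
  -- Kb is nonnegative
  have hKb0 : 0 ≤ Kb := by
    have h1 := hlp (0+3) (by omega)
    have h2 := hxp (0+3) (by omega)
    have hnn : (0:ℝ) ≤ |lam (0+3) - xi (0+3)| / (lam (0+3) * xi (0+3)) :=
      div_nonneg (abs_nonneg _) (by positivity)
    have h30 := hnn.trans (htail0 0)
    have hX : (0:ℝ) < (((0:ℕ):ℝ)+3) ^ ((2:ℝ)/d) := by positivity
    by_contra hneg
    push_neg at hneg
    nlinarith [mul_pos (neg_pos.mpr hneg) (one_div_pos.mpr hX)]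
  -- bound for F (k+2)
  have hFtail : ∀ k : ℕ, F (k+2) ≤ K * Q (k+3) := by
    intro k
    have hX : (0:ℝ) < ((k:ℝ)+3) ^ ((2:ℝ)/d) := by positivity
    have h1 := hlp (k+3) (by omega)
    have h2 := hxp (k+3) (by omega)
    have hFk : F (k+2) = (|lam (k+3) - xi (k+3)| / (lam (k+3) * xi (k+3))) ^ p := by
      simp only [hF, show k+2+1 = k+3 from by omega]
    rw [hFk]
    have step1 : (|lam (k+3) - xi (k+3)| / (lam (k+3) * xi (k+3))) ^ p ≤
        (Kb * (1 / ((k:ℝ)+3) ^ ((2:ℝ)/d))) ^ p :=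
      Real.rpow_le_rpow (div_nonneg (abs_nonneg _) (by positivity)) (htail0 k) hp0.le
    refine step1.trans (le_of_eq ?_)
    rw [Real.mul_rpow hKb0 (by positivity), ← hK]
    congr 1
    rw [Real.div_rpow (by norm_num : (0:ℝ) ≤ 1) (by positivity), Real.one_rpow,
      ← Real.rpow_mul (by positivity : (0:ℝ) ≤ (k:ℝ)+3),
      show (2:ℝ)/d * p = s by rw [hsdef]; ring, hQ]
    push_cast
    ring_nf
  -- summability
  have hQsum : Summable Q := Real.summable_one_div_nat_rpow.mpr hs1
  have hQsum1 : Summable (fun k => Q (k+1)) := (summable_nat_add_iff 1).mpr hQsum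
  have hQsum2 : Summable (fun k => Q (k+2)) := (summable_nat_add_iff 2).mpr hQsum
  have hQ3 : Summable (fun k => Q (k+3)) := (summable_nat_add_iff 3).mpr hQsum
  have hGsum : Summable (fun k => K * Q (k+3)) := hQ3.mul_left K
  have hFsum2 : Summable (fun k => F (k+2)) :=
    Summable.of_nonneg_of_le (fun k => hF0 _) hFtail hGsum
  have hFsum : Summable F := (summable_nat_add_iff 2).mp hFsum2
  have hFsum1 : Summable (fun k => F (k+1)) := (summable_nat_add_iff 1).mpr hFsum
  -- splitting of the main series
  have hsplit : ∑' n, F n = F 0 + F 1 + ∑' k, F (k+2) := by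
    have e1 : ∑' k, F (k+1+1) = ∑' k, F (k+2) :=
      tsum_congr fun k => congrArg F (by omega)
    rw [Summable.tsum_eq_zero_add hFsum, Summable.tsum_eq_zero_add hFsum1, e1, ← add_assoc]
  -- zeta values
  have hQ0 : Q 0 = 0 := by
    rw [hQ]
    simp [Real.zero_rpow hs0.ne']
  have hQ1 : Q 1 = 1 := by
    rw [hQ]
    simp
  have hQ2v : Q 2 = (1/2:ℝ) ^ s := by
    rw [hQ, Real.div_rpow (by norm_num) (by norm_num), Real.one_rpow]
    norm_num
  have hzeta : zetaReal s = Q 0 + (Q 1 + (Q 2 + ∑' k, Q (k+3))) := by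
    have e1 : ∑' k, Q (k+1+1) = ∑' k, Q (k+2) :=
      tsum_congr fun k => congrArg Q (by omega)
    have e2 : ∑' k, Q (k+2+1) = ∑' k, Q (k+3) :=
      tsum_congr fun k => congrArg Q (by omega)
    have h0 : zetaReal s = ∑' n, Q n := rfl
    rw [h0, Summable.tsum_eq_zero_add hQsum, Summable.tsum_eq_zero_add hQsum1, e1,
      Summable.tsum_eq_zero_add hQsum2, e2]
  have htailQ : ∑' k, Q (k+3) = zetaReal s - 1 - (1/2:ℝ) ^ s := by
    rw [hzeta, hQ0, hQ1, hQ2v]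
    ring
  have htailF : ∑' k, F (k+2) ≤ K * ∑' k, Q (k+3) := by
    calc ∑' k, F (k+2) ≤ ∑' k, K * Q (k+3) := Summable.tsum_le_tsum hFtail hFsum2 hGsum
      _ = K * ∑' k, Q (k+3) := tsum_mul_left
  have hCeq : C = (coef * (unitBallVol d * Vh) ^ ((2:ℝ)/d) - 1/mu) ^ p
      + (coef * (unitBallVol d * Vh / 2) ^ ((2:ℝ)/d) - (1/mu) * ((d:ℝ)/((d:ℝ)+4))) ^ p := by
    rw [hC, show Finset.Icc (1:ℕ) 2 = {1, 2} from rfl, Finset.sum_pair (by norm_num)]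
    norm_num
  have part1 : ∑' n, F n ≤ C + K * (zetaReal s - 1 - (1/2:ℝ) ^ s) := by
    rw [hsplit, hCeq, ← htailQ]
    linarith [hF0le, hF1le, htailF]
  exact ⟨part1, Real.rpow_le_rpow (tsum_nonneg hF0) part1 (by positivity)⟩
end

section
/- Let (λ_n)_{n≥1} and (ξ_n)_{n≥1} satisfy the spectral bounds with volumes V_λ and V_ξ respectively, let p > d/2, and set V̂ = max(V_λ, V_ξ), μ = max(λ_1, ξ_1), and K = [(d+2)/(d·4π²)·(B_d·V̂)^{2/d} − (1/μ)·d/(d+2.64)]^p. Then for every integer N ≥ 2, the tail of the WESD series satisfies Σ_{n=N+1}^∞ (|λ_n − ξ_n|/(λ_n·ξ_n))^p ≤ K·[ζ(2p/d) − 1 − (1/2)^{2p/d} − Σ_{n=3}^N (1/n)^{2p/d}], where ζ is the Riemann zeta function and the sum Σ_{n=3}^N is empty for N = 2. -/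
open Real

/-- One-sided bounds on `1/lam m` coming from the spectral bounds hypotheses. -/
lemma inv_lam_bounds (d : ℕ) (hd : 2 ≤ d) (V' V : ℝ) (hV' : 0 < V') (hVV : V' ≤ V)
    (μ : ℝ) (lam : ℕ → ℝ) (h : SpectralBounds d V' lam) (hμ : lam 1 ≤ μ)
    (m : ℕ) (hm : 3 ≤ m) :
    (1 / μ) * ((d : ℝ) / ((d : ℝ) + 2.64)) * (m : ℝ) ^ (-((2 : ℝ) / d)) ≤ 1 / lam m ∧
    1 / lam m ≤ ((d : ℝ) + 2) / ((d : ℝ) * (4 * π ^ 2)) *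
      (unitBallVol d * V) ^ ((2 : ℝ) / d) * (m : ℝ) ^ (-((2 : ℝ) / d)) := by
  obtain ⟨hpos, hmono, hLY, h2, hCY⟩ := h
  have hπ : (0 : ℝ) < π := Real.pi_pos
  have hdR : (2 : ℝ) ≤ d := by exact_mod_cast hd
  have hd0 : (0 : ℝ) < d := by linarith
  have hB : 0 < unitBallVol d := unitBallVol_pos d
  have hV : 0 < V := lt_of_lt_of_le hV' hVV
  have hm0 : (0 : ℝ) < m := by exact_mod_cast (by omega : 0 < m)
  have hlm : 0 < lam m := hpos m (by omega)
  have hμ0 : 0 < μ := lt_of_lt_of_le (hpos 1 le_rfl) hμ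
  have hmr : (0 : ℝ) < (m : ℝ) ^ ((2 : ℝ) / d) := Real.rpow_pos_of_pos hm0 _
  have hneg : (m : ℝ) ^ (-((2 : ℝ) / d)) = ((m : ℝ) ^ ((2 : ℝ) / d))⁻¹ :=
    Real.rpow_neg hm0.le _
  constructor
  · -- lower bound via Cheng–Yang
    obtain ⟨k, rfl⟩ : ∃ k, m = k + 1 := ⟨m - 1, by omega⟩
    have hk2 : 2 ≤ k := by omega
    have hkr : ((k : ℝ)) ^ ((2 : ℝ) / d) ≤ ((k + 1 : ℕ) : ℝ) ^ ((2 : ℝ) / d) := by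
      apply Real.rpow_le_rpow (Nat.cast_nonneg k) (by exact_mod_cast Nat.le_succ k)
      positivity
    have hup : lam (k + 1) ≤ (1 + 2.64 / (d : ℝ)) * ((k + 1 : ℕ) : ℝ) ^ ((2 : ℝ) / d) * μ := by
      calc lam (k + 1) ≤ (1 + 2.64 / (d : ℝ)) * (k : ℝ) ^ ((2 : ℝ) / d) * lam 1 := hCY k hk2
        _ ≤ (1 + 2.64 / (d : ℝ)) * ((k + 1 : ℕ) : ℝ) ^ ((2 : ℝ) / d) * μ := by
            have h1 : (0 : ℝ) < 1 + 2.64 / (d : ℝ) := by positivity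
            have hl1 : 0 < lam 1 := hpos 1 le_rfl
            have := mul_le_mul (mul_le_mul_of_nonneg_left hkr h1.le) hμ hl1.le
              (by positivity)
            exact this
    have hub : (0 : ℝ) < (1 + 2.64 / (d : ℝ)) * ((k + 1 : ℕ) : ℝ) ^ ((2 : ℝ) / d) * μ := by
      positivity
    have := one_div_le_one_div_of_le hlm hup
    refine le_trans (le_of_eq ?_) this
    rw [hneg]
    have h264 : (0 : ℝ) < (d : ℝ) + 2.64 := by positivity
    field_simp
    all_goals first | ring1 | (left; ring1) | (left; trivial)
  · -- upper bound via Li–Yau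
    have hmono' : ((m : ℝ) / (unitBallVol d * V)) ^ ((2 : ℝ) / d)
        ≤ ((m : ℝ) / (unitBallVol d * V')) ^ ((2 : ℝ) / d) := by
      apply Real.rpow_le_rpow (by positivity)
      · apply div_le_div_of_nonneg_left hm0.le (by positivity)
        exact mul_le_mul_of_nonneg_left hVV hB.le
      · positivity
    have hlow : ((d : ℝ) / ((d : ℝ) + 2)) * (4 * π ^ 2) *
        ((m : ℝ) / (unitBallVol d * V)) ^ ((2 : ℝ) / d) ≤ lam m := by
      refine le_trans ?_ (hLY m (by omega))
      have hc : (0 : ℝ) < (d : ℝ) / ((d : ℝ) + 2) * (4 * π ^ 2) := by positivity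
      exact mul_le_mul_of_nonneg_left hmono' hc.le
    have hlow0 : (0 : ℝ) < ((d : ℝ) / ((d : ℝ) + 2)) * (4 * π ^ 2) *
        ((m : ℝ) / (unitBallVol d * V)) ^ ((2 : ℝ) / d) := by positivity
    have := one_div_le_one_div_of_le hlow0 hlow
    refine le_trans this (le_of_eq ?_)
    rw [Real.div_rpow hm0.le (by positivity), hneg]
    have hBV : (0 : ℝ) < (unitBallVol d * V) ^ ((2 : ℝ) / d) := by positivity
    field_simp
    all_goals first | ring1 | (left; ring1) | (left; trivial)

set_option maxHeartbeats 1000000 in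
/-- Tail bound for the WESD series: for every `N ≥ 2`, the tail
`Σ_{n=N+1}^∞ (|λ_n - ξ_n|/(λ_n·ξ_n))^p` is bounded by
`K·[ζ(2p/d) - 1 - (1/2)^{2p/d} - Σ_{n=3}^N (1/n)^{2p/d}]`. -/
theorem wesd_tail_bound (d : ℕ) (hd : 2 ≤ d) (Vl Vx : ℝ) (hVl : 0 < Vl) (hVx : 0 < Vx)
    (lam xi : ℕ → ℝ) (hlam : SpectralBounds d Vl lam) (hxi : SpectralBounds d Vx xi)
    (p : ℝ) (hp : (d : ℝ) / 2 < p) (K : ℝ)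
    (hK : K = (((d : ℝ) + 2) / ((d : ℝ) * (4 * π ^ 2)) *
          (unitBallVol d * max Vl Vx) ^ ((2 : ℝ) / d) -
        (1 / max (lam 1) (xi 1)) * ((d : ℝ) / ((d : ℝ) + 2.64))) ^ p)
    (N : ℕ) (hN : 2 ≤ N) :
    (∑' n : ℕ, (|lam (n + N + 1) - xi (n + N + 1)| / (lam (n + N + 1) * xi (n + N + 1))) ^ p) ≤
      K * (zetaReal (2 * p / d) - 1 - (1 / 2 : ℝ) ^ (2 * p / d) -
        ∑ n ∈ Finset.Icc 3 N, (1 / (n : ℝ)) ^ (2 * p / d)) := by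
  have hdR : (2 : ℝ) ≤ d := by exact_mod_cast hd
  have hd0 : (0 : ℝ) < d := by linarith
  have hp0 : 0 < p := lt_trans (by positivity) hp
  set s := 2 * p / (d : ℝ) with hs
  have hs1 : 1 < s := by rw [hs, lt_div_iff₀ hd0]; linarith
  set A := ((d : ℝ) + 2) / ((d : ℝ) * (4 * π ^ 2)) *
      (unitBallVol d * max Vl Vx) ^ ((2 : ℝ) / d) with hA
  set C := (1 / max (lam 1) (xi 1)) * ((d : ℝ) / ((d : ℝ) + 2.64)) with hC
  have hμl : lam 1 ≤ max (lam 1) (xi 1) := le_max_left _ _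
  have hμx : xi 1 ≤ max (lam 1) (xi 1) := le_max_right _ _
  have hlB := fun m hm => inv_lam_bounds d hd Vl (max Vl Vx) hVl (le_max_left _ _)
    (max (lam 1) (xi 1)) lam hlam hμl m hm
  have hxB := fun m hm => inv_lam_bounds d hd Vx (max Vl Vx) hVx (le_max_right _ _)
    (max (lam 1) (xi 1)) xi hxi hμx m hm
  -- C ≤ A
  have hCA : C ≤ A := by
    obtain ⟨h1, h2⟩ := hlB 3 le_rfl
    have ht : (0 : ℝ) < ((3 : ℕ) : ℝ) ^ (-((2 : ℝ) / d)) :=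
      Real.rpow_pos_of_pos (by norm_num) _
    have := le_trans h1 h2
    exact le_of_mul_le_mul_right this ht
  have hK0 : 0 ≤ K := by rw [hK]; exact Real.rpow_nonneg (sub_nonneg.mpr hCA) p
  have hlpos := hlam.1
  have hxpos := hxi.1
  -- pointwise bound
  have hterm : ∀ n : ℕ,
      (|lam (n + N + 1) - xi (n + N + 1)| / (lam (n + N + 1) * xi (n + N + 1))) ^ p ≤
      K * (1 / ((n + N + 1 : ℕ) : ℝ)) ^ s := by
    intro n
    set m := n + N + 1 with hm
    have hm3 : 3 ≤ m := by omega
    have hlm : 0 < lam m := hlpos m (by omega)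
    have hxm : 0 < xi m := hxpos m (by omega)
    obtain ⟨hl1, hl2⟩ := hlB m hm3
    obtain ⟨hx1, hx2⟩ := hxB m hm3
    have hm0 : (0 : ℝ) < m := by exact_mod_cast (by omega : 0 < m)
    set t := (m : ℝ) ^ (-((2 : ℝ) / d)) with ht
    have ht0 : 0 < t := Real.rpow_pos_of_pos hm0 _
    have habs : |lam m - xi m| / (lam m * xi m) ≤ (A - C) * t := by
      have heq : |lam m - xi m| / (lam m * xi m) = |1 / xi m - 1 / lam m| := by
        rw [one_div, one_div, inv_sub_inv hxm.ne' hlm.ne', abs_div,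
          abs_of_pos (mul_pos hxm hlm), mul_comm (xi m) (lam m)]
      rw [heq, abs_sub_le_iff]
      constructor <;> nlinarith
    calc (|lam m - xi m| / (lam m * xi m)) ^ p ≤ ((A - C) * t) ^ p :=
          Real.rpow_le_rpow (by positivity) habs hp0.le
      _ = (A - C) ^ p * t ^ p := Real.mul_rpow (sub_nonneg.mpr hCA) ht0.le
      _ = K * (1 / (m : ℝ)) ^ s := by
          rw [hK]
          congr 1
          rw [ht, ← Real.rpow_mul hm0.le, one_div, Real.inv_rpow hm0.le,
            ← Real.rpow_neg hm0.le]
          congr 1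
          rw [hs]; ring
  -- summability
  have hfsum : Summable (fun i : ℕ => (1 / (i : ℝ)) ^ s) := by
    refine (Real.summable_one_div_nat_rpow.mpr hs1).congr fun i => ?_
    rw [eq_comm, one_div, Real.inv_rpow (Nat.cast_nonneg i), one_div]
  have hgsum : Summable (fun n : ℕ => (1 / ((n + (N + 1) : ℕ) : ℝ)) ^ s) :=
    (summable_nat_add_iff (N + 1)).mpr hfsum
  have hKg : Summable (fun n : ℕ => K * (1 / ((n + (N + 1) : ℕ) : ℝ)) ^ s) :=
    hgsum.mul_left K
  have hLHS : Summable (fun n : ℕ =>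
      (|lam (n + N + 1) - xi (n + N + 1)| / (lam (n + N + 1) * xi (n + N + 1))) ^ p) :=
    Summable.of_nonneg_of_le (fun n => Real.rpow_nonneg
      (div_nonneg (abs_nonneg _)
        (mul_pos (hlpos _ (by omega)) (hxpos _ (by omega))).le) p) hterm hKg
  have hs0 : s ≠ 0 := by linarith
  calc (∑' n : ℕ, (|lam (n + N + 1) - xi (n + N + 1)| /
          (lam (n + N + 1) * xi (n + N + 1))) ^ p)
      ≤ ∑' n : ℕ, K * (1 / ((n + (N + 1) : ℕ) : ℝ)) ^ s := Summable.tsum_le_tsum hterm hLHS hKg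
    _ = K * ∑' n : ℕ, (1 / ((n + (N + 1) : ℕ) : ℝ)) ^ s := tsum_mul_left
    _ = K * ((∑' i : ℕ, (1 / (i : ℝ)) ^ s) -
          ∑ i ∈ Finset.range (N + 1), (1 / (i : ℝ)) ^ s) := by
        congr 1
        have h := Summable.sum_add_tsum_nat_add (f := fun i : ℕ => (1 / (i : ℝ)) ^ s) (N + 1) hfsum
        push_cast at h ⊢
        linarith
    _ = K * (zetaReal s - 1 - (1 / 2 : ℝ) ^ s - ∑ n ∈ Finset.Icc 3 N, (1 / (n : ℝ)) ^ s) := by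
        have hz : zetaReal s = ∑' i : ℕ, (1 / (i : ℝ)) ^ s := by
          unfold zetaReal
          refine tsum_congr fun i => ?_
          rw [eq_comm, one_div, Real.inv_rpow (Nat.cast_nonneg i), one_div]
        have hsplit : ∑ i ∈ Finset.range (N + 1), (1 / (i : ℝ)) ^ s =
            1 + (1 / 2 : ℝ) ^ s + ∑ n ∈ Finset.Icc 3 N, (1 / (n : ℝ)) ^ s := by
          rw [Finset.range_eq_Ico,
            ← Finset.sum_Ico_consecutive (fun i : ℕ => (1 / (i : ℝ)) ^ s)
              (Nat.zero_le 3) (by omega : 3 ≤ N + 1)]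
          have h1 : ∑ i ∈ Finset.Ico (0:ℕ) 3, (1 / (i : ℝ)) ^ s = 0 + 1 + (1 / 2 : ℝ) ^ s := by
            rw [← Finset.range_eq_Ico, Finset.sum_range_succ, Finset.sum_range_succ,
              Finset.sum_range_one]
            norm_num [Real.zero_rpow hs0, Real.one_rpow]
          rw [h1, Finset.Ico_add_one_right_eq_Icc]
          ring
        rw [hz, hsplit]
        ring
end
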